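/- For all positive integers a, b, c with 2b ≥ a + c, there exist x, y ∈ ℕ⁷ such that x ∘ x = a, x ∘ y = b, and y ∘ y = c, where ∘ is the Lorentzian product x₀y₀ − x₁y₁ − ⋯ − x₆y₆. -/

import Mathlib

/-!
Write `c = 2t + e` with `e ∈ {0, 1}` and put `s = b - t - e`. The Lorentzian product of
`(m + 1, m, u)` and `(m' + 1, m', u')` is `m + m' + 1 - u ⬝ᵥ u'`, so
`y = (t + 1, t, 1 - e, 0, 0, 0, 0)` has `y ∘ y = c`, and `x = (s + 1, s, 1 - e, v)` has
`x ∘ y = b` and `x ∘ x = 2b - c - v ⬝ᵥ v`. By Lagrange's four-square theorem `v ∈ ℕ⁴` can be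
chosen with `v ⬝ᵥ v = 2b - a - c`, giving `x ∘ x = a`; and `s, t ≥ 0` because `0 ≤ c < 2b`.
-/

open Matrix

def lorentz {R : Type*} [CommRing R] {n : ℕ} (x y : Fin (n + 1) → R) : R :=
  x 0 * y 0 - ∑ i : Fin n, x i.succ * y i.succ

lemma lorentz_cons_add_one_cons {R : Type*} [CommRing R] {n : ℕ} (m m' : R) (u u' : Fin n → R) :
    lorentz (vecCons (m + 1) (vecCons m u)) (vecCons (m' + 1) (vecCons m' u')) =
      m + m' + 1 - u ⬝ᵥ u' := by
  simp only [lorentz, Fin.sum_univ_succ, cons_val_zero, cons_val_succ, dotProduct]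
  ring

lemma exists_nonneg_dotProduct_self_eq {m : ℤ} (hm : 0 ≤ m) :
    ∃ v : Fin 4 → ℤ, (∀ i, 0 ≤ v i) ∧ v ⬝ᵥ v = m := by
  obtain ⟨p, q, r, s, hpqrs⟩ := Nat.sum_four_squares m.toNat
  refine ⟨![p, q, r, s], fun i => by fin_cases i <;> simp, ?_⟩
  rw [← Int.toNat_of_nonneg hm, ← hpqrs]
  simp only [dotProduct, Fin.sum_univ_four, cons_val_zero, cons_val_one, cons_val, Nat.cast_add,
    Nat.cast_pow]
  ring

lemma vecCons_nonneg_iff {α : Type*} [Zero α] [LE α] {n : ℕ} (a : α) (v : Fin n → α) :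
    (∀ i, 0 ≤ vecCons a v i) ↔ 0 ≤ a ∧ ∀ i, 0 ≤ v i := by
  simp only [Fin.forall_fin_succ, cons_val_zero, cons_val_succ]

theorem N7_linearly_complete_general (a b c : ℤ) (ha : 0 < a) (hc : 0 < c)
    (h : a + c ≤ 2 * b) :
    ∃ x y : Fin 7 → ℤ, (∀ i, 0 ≤ x i) ∧ (∀ i, 0 ≤ y i) ∧
      x 0 * x 0 - (∑ i : Fin 6, x i.succ * x i.succ) = a ∧
      x 0 * y 0 - (∑ i : Fin 6, x i.succ * y i.succ) = b ∧
      y 0 * y 0 - (∑ i : Fin 6, y i.succ * y i.succ) = c := by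
  obtain ⟨v, hv_nonneg, hv⟩ :=
    exists_nonneg_dotProduct_self_eq (by linarith : 0 ≤ 2 * b - a - c)
  obtain ⟨t, e, rfl, he⟩ : ∃ t e, c = 2 * t + e ∧ (e = 0 ∨ e = 1) :=
    ⟨c / 2, c % 2, by omega, by omega⟩
  have hf : (1 - e) * (1 - e) = 1 - e := by rcases he with rfl | rfl <;> norm_num
  refine ⟨vecCons (b - t - e + 1) (vecCons (b - t - e) (vecCons (1 - e) v)),
    vecCons (t + 1) (vecCons t (vecCons (1 - e) 0)), ?_, ?_, ?_, ?_, ?_⟩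
  · simp only [vecCons_nonneg_iff]
    exact ⟨by omega, by omega, by omega, hv_nonneg⟩
  · simp only [vecCons_nonneg_iff]
    exact ⟨by omega, by omega, by omega, fun _ => le_rfl⟩
  · refine (lorentz_cons_add_one_cons _ _ _ _).trans ?_
    rw [cons_dotProduct_cons, hv, hf]
    ring
  · refine (lorentz_cons_add_one_cons _ _ _ _).trans ?_
    rw [cons_dotProduct_cons, dotProduct_zero, hf]
    ring
  · refine (lorentz_cons_add_one_cons _ _ _ _).trans ?_
    rw [cons_dotProduct_cons, dotProduct_zero, hf]
    ring

/-- (ℕ⁷, ∘) is linearly complete for the Lorentzian product. -/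
theorem N7_linearly_complete (a b c : ℤ) (ha : 0 < a) (hb : 0 < b) (hc : 0 < c)
    (h : a + c ≤ 2 * b) :
    ∃ x y : Fin 7 → ℤ, (∀ i, 0 ≤ x i) ∧ (∀ i, 0 ≤ y i) ∧
      x 0 * x 0 - (∑ i : Fin 6, x i.succ * x i.succ) = a ∧
      x 0 * y 0 - (∑ i : Fin 6, x i.succ * y i.succ) = b ∧
      y 0 * y 0 - (∑ i : Fin 6, y i.succ * y i.succ) = c :=
  N7_linearly_complete_general a b c ha hc h
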